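/- Let S : Δ⁺ → ℝ be continuous, symmetric, additive, and subadditive. Then S is Schur-concave: for all r, s ∈ Δ_m⁺ with r ≻ s, one has S(r) ≤ S(s). -/

import Mathlib

open scoped BigOperators

/-- `p` is a probability distribution on the finite type `ι`. -/
def IsProbDist {ι : Type*} [Fintype ι] (p : ι → ℝ) : Prop :=
  (∀ i, 0 ≤ p i) ∧ ∑ i, p i = 1

/-- `p` is a probability distribution with strictly positive entries. -/
def IsPosProbDist {ι : Type*} [Fintype ι] (p : ι → ℝ) : Prop :=
  (∀ i, 0 < p i) ∧ ∑ i, p i = 1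

/-- `p` majorizes `q`: for every `k`, the sum of the `k` largest entries of `p` is at least
the sum of the `k` largest entries of `q`.  For nonnegative vectors this is equivalent to:
for every set `A` of indices of `q` there is a set `B` of indices of `p` with `|B| ≤ |A|`
whose `p`-sum dominates the `q`-sum over `A`. -/
def Majorizes {ι κ : Type*} [Fintype ι] [Fintype κ] (p : ι → ℝ) (q : κ → ℝ) : Prop :=
  ∀ A : Finset κ, ∃ B : Finset ι, B.card ≤ A.card ∧ ∑ j ∈ A, q j ≤ ∑ i ∈ B, p i

/-- Kronecker (tensor) product of two vectors. -/
def kron {ι κ : Type*} (p : ι → ℝ) (q : κ → ℝ) : ι × κ → ℝ :=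
  fun x => p x.1 * q x.2

/-- Shannon entropy (natural logarithm; note `Real.log 0 = 0`, so `0 log 0 = 0`). -/
noncomputable def shannonEntropy {ι : Type*} [Fintype ι] (p : ι → ℝ) : ℝ :=
  -∑ i, p i * Real.log (p i)

open Classical in
/-- The number of nonzero entries of `p`. -/
noncomputable def distRank {ι : Type*} [Fintype ι] (p : ι → ℝ) : ℕ :=
  (Finset.univ.filter fun i => p i ≠ 0).card

/-- Marginal of a `k`-partite distribution on its `i`-th factor. -/
noncomputable def marginal {k : ℕ} {d : Fin k → ℕ} (r : (∀ i, Fin (d i)) → ℝ) (i : Fin k) :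
    Fin (d i) → ℝ :=
  fun b => ∑ y : ∀ j, Fin (d j), if y i = b then r y else 0

open Classical in
/-- Rényi entropy of order `α` (with `H₁` being the Shannon entropy). -/
noncomputable def renyi {ι : Type*} [Fintype ι] (α : ℝ) (p : ι → ℝ) : ℝ :=
  if α = 1 then shannonEntropy p
  else (Real.sign α / (1 - α)) * Real.log (∑ i, p i ^ α)

/-- Min-entropy `H_∞(p) = -log (max_i p_i)`. -/
noncomputable def renyiInf {ι : Type*} [Fintype ι] (p : ι → ℝ) : ℝ :=
  -Real.log (⨆ i, p i)

/-- Burg entropy `H_Burg(p) = (1/m) ∑ log p_i`. -/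
noncomputable def burg {ι : Type*} [Fintype ι] (p : ι → ℝ) : ℝ :=
  (1 / (Fintype.card ι : ℝ)) * ∑ i, Real.log (p i)

open Classical in
/-- Rényi entropy as an extended real: it is `-∞` for `α < 0` when `p` has a zero entry. -/
noncomputable def renyiE {ι : Type*} [Fintype ι] (α : ℝ) (p : ι → ℝ) : EReal :=
  if α < 0 ∧ ∃ i, p i = 0 then ⊥ else (renyi α p : EReal)

open Classical in
/-- Burg entropy as an extended real: it is `-∞` when `p` has a zero entry. -/
noncomputable def burgE {ι : Type*} [Fintype ι] (p : ι → ℝ) : EReal :=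
  if ∃ i, p i = 0 then ⊥ else (burg p : EReal)

/-- `p` trumps `q`: there is a catalyst distribution `r` with `p ⊗ r ≻ q ⊗ r`. -/
def Trumps {ι κ : Type*} [Fintype ι] [Fintype κ] (p : ι → ℝ) (q : κ → ℝ) : Prop :=
  ∃ (n : ℕ) (r : Fin n → ℝ), IsProbDist r ∧ Majorizes (kron p r) (kron q r)

/-- The bipartite extension `q_{AB}` of `q` with parameters `a i ∈ [0, q i]` and `n`:
the `m × (n+1)` matrix whose first column is `(q i - a i)` and whose remaining `n`
columns all equal `(a i / n)`. -/
noncomputable def qAB {m : ℕ} (q a : Fin m → ℝ) (n : ℕ) : Fin m × Fin (n + 1) → ℝ :=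
  fun x => if x.2 = 0 then q x.1 - a x.1 else a x.1 / n

/-- The `B`-marginal `(1 - a, a/n, …, a/n)` of `qAB`, where `a = ∑ i, a i`. -/
noncomputable def qBext {m : ℕ} (a : Fin m → ℝ) (n : ℕ) : Fin (n + 1) → ℝ :=
  fun j => if j = 0 then 1 - ∑ i, a i else (∑ i, a i) / n

/-- Symmetry of an entropy-like functional on positive distributions. -/
def SymmetricS (S : ∀ n : ℕ, (Fin n → ℝ) → ℝ) : Prop :=
  ∀ (n : ℕ) (p : Fin n → ℝ), IsPosProbDist p →
    ∀ σ : Equiv.Perm (Fin n), S n (p ∘ σ) = S n p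

/-- Additivity: `S(p ⊗ q) = S(p) + S(q)`. -/
def AdditiveS (S : ∀ n : ℕ, (Fin n → ℝ) → ℝ) : Prop :=
  ∀ (m n : ℕ) (p : Fin m → ℝ) (q : Fin n → ℝ), IsPosProbDist p → IsPosProbDist q →
    S (m * n) (fun x => kron p q (finProdFinEquiv.symm x)) = S m p + S n q

/-- Subadditivity: `S(p_{AB}) ≤ S(p_A ⊗ p_B)` for bipartite distributions. -/
def SubadditiveS (S : ∀ n : ℕ, (Fin n → ℝ) → ℝ) : Prop :=
  ∀ (m n : ℕ) (P : Fin m × Fin n → ℝ), IsPosProbDist P →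
    S (m * n) (fun x => P (finProdFinEquiv.symm x)) ≤
      S (m * n) (fun x =>
        kron (fun i => ∑ j, P (i, j)) (fun j => ∑ i, P (i, j)) (finProdFinEquiv.symm x))

/-- Continuity of `S` on each simplex of positive distributions. -/
def ContinuousS (S : ∀ n : ℕ, (Fin n → ℝ) → ℝ) : Prop :=
  ∀ n : ℕ, ContinuousOn (S n) {p : Fin n → ℝ | IsPosProbDist p}

/-! Majorization `r ≻ s` puts `s` in the convex hull of the permutations of `r` (Rado): otherwise a
linear functional `c` separates them, and pairing the sorted `c` with the sorted `r` contradicts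
the partial-sum inequalities of majorization by Abel summation. Writing `s = ∑ₖ tₖ (r ∘ σₖ)` with
`t` positive, the bipartite distribution `P(i, k) = r(σₖ i) tₖ` is a permutation of `r ⊗ t` with
marginals `s` and `t`, so `S(r) + S(t) = S(P) ≤ S(s ⊗ t) = S(s) + S(t)`. -/

open Finset

theorem Finset.sum_le_sum_of_card_le_of_forall_le {ι M : Type*} [AddCommMonoid M] [LinearOrder M]
    [IsOrderedAddMonoid M] {s t : Finset ι} {f : ι → M} (hcard : #s ≤ #t)
    (hle : ∀ a ∈ s, ∀ b ∈ t, f a ≤ f b) (hnonneg : ∀ b ∈ t, 0 ≤ f b) :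
    ∑ a ∈ s, f a ≤ ∑ b ∈ t, f b := by
  rcases t.eq_empty_or_nonempty with rfl | ht
  · simp_all
  obtain ⟨b₀, hb₀, hmin⟩ := t.exists_min_image f ht
  calc ∑ a ∈ s, f a ≤ #s • f b₀ := s.sum_le_card_nsmul _ _ fun a ha => hle a ha b₀ hb₀
    _ ≤ #t • f b₀ := nsmul_le_nsmul_left (hnonneg b₀ hb₀) hcard
    _ ≤ ∑ b ∈ t, f b := t.card_nsmul_le_sum _ _ hmin

theorem Antitone.sum_le_sum_castLE {M : Type*} [AddCommMonoid M] [LinearOrder M]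
    [IsOrderedAddMonoid M] {m k : ℕ} {v : Fin m → M} (hv : Antitone v) (hv₀ : 0 ≤ v)
    (hk : k ≤ m) {B : Finset (Fin m)} (hB : #B ≤ k) :
    ∑ i ∈ B, v i ≤ ∑ i : Fin k, v (Fin.castLE hk i) := by
  set I := univ.map (Fin.castLEEmb hk)
  have hmem : ∀ a, a ∈ I ↔ (a : ℕ) < k := fun a =>
    ⟨by rw [mem_map]; rintro ⟨i, -, rfl⟩; exact i.2,
      fun h => mem_map.2 ⟨⟨a, h⟩, mem_univ _, rfl⟩⟩
  have hcard : #(B \ I) ≤ #(I \ B) := by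
    have hBI := card_sdiff_add_card_inter B I
    have hIB := card_sdiff_add_card_inter I B
    have hIk : #I = k := by simp [I]
    rw [inter_comm] at hIB
    omega
  rw [show ∑ i : Fin k, v (Fin.castLE hk i) = ∑ i ∈ I, v i by simp [I],
    ← sum_inter_add_sum_sdiff B I, ← sum_inter_add_sum_sdiff I B, inter_comm]
  refine add_le_add_right
    (sum_le_sum_of_card_le_of_forall_le hcard (fun a ha b hb => hv ?_) fun b _ => hv₀ b) _
  simp only [mem_sdiff, hmem] at ha hb
  exact Fin.le_iff_val_le_val.2 (by omega)

theorem sum_mul_le_sum_mul_of_partialSums_le {m : ℕ} {f x y : Fin m → ℝ} (hf : Antitone f)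
    (hxy : ∀ k (hk : k ≤ m),
      ∑ i : Fin k, x (Fin.castLE hk i) ≤ ∑ i : Fin k, y (Fin.castLE hk i))
    (hsum : ∑ i, x i = ∑ i, y i) :
    ∑ i, f i * x i ≤ ∑ i, f i * y i := by
  let pad (g : Fin m → ℝ) (j : ℕ) : ℝ := if h : j < m then g ⟨j, h⟩ else 0
  have hpad : ∀ g k (hk : k ≤ m),
      ∑ j ∈ range k, pad g j = ∑ i : Fin k, g (Fin.castLE hk i) := by
    intro g k hk
    rw [← Fin.sum_univ_eq_sum_range]
    exact sum_congr rfl fun i _ => dif_pos (i.2.trans_le hk)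
  set G : ℕ → ℝ := fun k => ∑ j ∈ range k, pad (x - y) j
  have hG : ∀ k ≤ m, G k ≤ 0 := fun k hk => by
    simpa [G, hpad _ k hk, sum_sub_distrib] using hxy k hk
  have hGm : G m = 0 := by simp [G, hpad _ m le_rfl, sum_sub_distrib, hsum]
  rw [← sub_nonpos, ← sum_sub_distrib]
  calc ∑ i, (f i * x i - f i * y i) = ∑ j ∈ range m, pad f j • pad (x - y) j := by
        rw [← Fin.sum_univ_eq_sum_range]
        simp [pad, mul_sub]
    _ = -∑ j ∈ range (m - 1), (pad f (j + 1) - pad f j) • G (j + 1) := by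
        rw [sum_range_by_parts, show ∑ j ∈ range m, pad (x - y) j = 0 from hGm, smul_zero,
          zero_sub]
    _ ≤ 0 := by
        refine neg_nonpos.2 (sum_nonneg fun j hj => ?_)
        have hj : j + 1 < m := by rw [mem_range] at hj; omega
        have hfj : pad f (j + 1) ≤ pad f j := by
          simp only [pad, dif_pos hj, dif_pos (Nat.lt_of_succ_lt hj)]
          exact hf (Fin.mk_le_mk.2 j.le_succ)
        exact smul_nonneg_of_nonpos_of_nonpos (sub_nonpos.2 hfj) (hG _ hj.le)

theorem Tuple.antitone_comp_sort_toDual {α : Type*} [LinearOrder α] {m : ℕ} (c : Fin m → α) :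
    Antitone (c ∘ Tuple.sort (OrderDual.toDual ∘ c)) :=
  Tuple.monotone_sort (OrderDual.toDual ∘ c)

theorem Majorizes.exists_perm_sum_mul_le {m : ℕ} {r s : Fin m → ℝ} (hmaj : Majorizes r s)
    (hr : 0 ≤ r) (hsum : ∑ i, s i = ∑ i, r i) (c : Fin m → ℝ) :
    ∃ σ : Equiv.Perm (Fin m), ∑ i, c i * s i ≤ ∑ i, c i * r (σ i) := by
  classical
  set τ := Tuple.sort (OrderDual.toDual ∘ c)
  set π := Tuple.sort (OrderDual.toDual ∘ r)
  -- `σ` sends the `j`-th largest entry of `c` to the `j`-th largest entry of `r`.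
  refine ⟨τ.symm.trans π, ?_⟩
  rw [← Equiv.sum_comp τ, ← Equiv.sum_comp τ (fun i => c i * r ((τ.symm.trans π) i))]
  simp only [Equiv.trans_apply, Equiv.symm_apply_apply]
  refine sum_mul_le_sum_mul_of_partialSums_le (Tuple.antitone_comp_sort_toDual c)
    (fun k hk => ?_) (by rw [Equiv.sum_comp τ s, Equiv.sum_comp π r, hsum])
  set A := (univ.map (Fin.castLEEmb hk)).map τ.toEmbedding
  obtain ⟨B, hB, hAB⟩ := hmaj A
  have hA : #A = k := by simp [A]
  calc ∑ i : Fin k, s (τ (Fin.castLE hk i)) = ∑ j ∈ A, s j := by simp [A]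
    _ ≤ ∑ i ∈ B, r i := hAB
    _ = ∑ i ∈ B.map π.symm.toEmbedding, r (π i) := by simp
    _ ≤ ∑ i : Fin k, r (π (Fin.castLE hk i)) :=
        (Tuple.antitone_comp_sort_toDual r).sum_le_sum_castLE (fun i => hr (π i)) hk
          (by rw [card_map]; omega)

theorem Majorizes.mem_convexHull_perm {m : ℕ} {r s : Fin m → ℝ} (hmaj : Majorizes r s)
    (hr : 0 ≤ r) (hsum : ∑ i, s i = ∑ i, r i) :
    s ∈ convexHull ℝ (Set.range fun σ : Equiv.Perm (Fin m) => r ∘ σ) := by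
  by_contra hs
  obtain ⟨f, u, hfu, hus⟩ := geometric_hahn_banach_closed_point (convex_convexHull ℝ _)
    ((Set.finite_range _).isCompact_convexHull (𝕜 := ℝ)).isClosed hs
  have hf : ∀ x, f x = ∑ i, f (Pi.single i 1) * x i := fun x => by
    conv_lhs => rw [pi_eq_sum_univ' x]
    simp [mul_comm]
  obtain ⟨σ, hσ⟩ := hmaj.exists_perm_sum_mul_le hr hsum fun i => f (Pi.single i 1)
  have hfσ := hfu _ (subset_convexHull ℝ _ ⟨σ, rfl⟩)
  rw [hf] at hfσ hus
  exact lt_irrefl u (hus.trans (hσ.trans_lt hfσ))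

theorem exists_isPosProbDist_of_mem_convexHull {E : Type*} [AddCommGroup E] [Module ℝ E]
    {s : Set E} {x : E} (hx : x ∈ convexHull ℝ s) :
    ∃ (K : ℕ) (t : Fin K → ℝ) (z : Fin K → E),
      IsPosProbDist t ∧ (∀ k, z k ∈ s) ∧ ∑ k, t k • z k = x := by
  classical
  obtain ⟨ι, _, w, z, hw₀, hw₁, hz, rfl⟩ := mem_convexHull_iff_exists_fintype.1 hx
  let e := (univ.filter fun i => w i ≠ 0).equivFin
  refine ⟨_, fun k => w (e.symm k), fun k => z (e.symm k), ⟨fun k => ?_, ?_⟩, fun k => hz _,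
    ?_⟩
  · exact (hw₀ _).lt_of_ne (mem_filter.1 (e.symm k).2).2.symm
  · rw [Equiv.sum_comp e.symm fun i => w i, sum_coe_sort _ w, sum_filter_ne_zero, hw₁]
  · rw [Equiv.sum_comp e.symm fun i => w i • z i, sum_coe_sort _ fun i => w i • z i]
    exact sum_filter_of_ne fun i _ hi h => hi (by rw [h, zero_smul])

theorem IsPosProbDist.comp_equiv {ι κ : Type*} [Fintype ι] [Fintype κ] {p : ι → ℝ}
    (hp : IsPosProbDist p) (e : κ ≃ ι) : IsPosProbDist (p ∘ e) :=
  ⟨fun i => hp.1 (e i), (Equiv.sum_comp e p).trans hp.2⟩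

theorem IsPosProbDist.kron {ι κ : Type*} [Fintype ι] [Fintype κ] {p : ι → ℝ}
    {q : κ → ℝ} (hp : IsPosProbDist p) (hq : IsPosProbDist q) : IsPosProbDist (kron p q) :=
  ⟨fun x => mul_pos (hp.1 x.1) (hq.1 x.2), by
    simp only [_root_.kron, Fintype.sum_prod_type, ← mul_sum, hq.2, mul_one, hp.2]⟩

theorem SymmetricS.apply_comp_perm {S : ∀ n : ℕ, (Fin n → ℝ) → ℝ} (hsym : SymmetricS S)
    {n : ℕ} {ι : Type*} [Fintype ι] (e : ι ≃ Fin n) {p : ι → ℝ} (hp : IsPosProbDist p)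
    (ρ : Equiv.Perm ι) :
    S n (fun x => (p ∘ ρ) (e.symm x)) = S n (fun x => p (e.symm x)) := by
  simpa [Function.comp_def] using
    hsym n (fun x => p (e.symm x)) (hp.comp_equiv e.symm) ((e.symm.trans ρ).trans e)

theorem schur_concave_general (S : ∀ n : ℕ, (Fin n → ℝ) → ℝ)
    (hsym : SymmetricS S)
    (hadd : AdditiveS S) (hsub : SubadditiveS S)
    (m : ℕ) (r s : Fin m → ℝ) (hr : IsPosProbDist r) (hs : IsPosProbDist s)
    (hmaj : Majorizes r s) :
    S m r ≤ S m s := by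
  obtain ⟨K, t, z, ht, hz, hts⟩ := exists_isPosProbDist_of_mem_convexHull
    (hmaj.mem_convexHull_perm (fun i => (hr.1 i).le) (hs.2.trans hr.2.symm))
  choose σ hσ using hz
  set P := kron r t ∘ Equiv.prodCongrLeft σ
  have hPs : (fun i => ∑ k, P (i, k)) = s := by
    funext i
    simp [P, kron, ← hts, ← hσ, mul_comm]
  have hPt : (fun k => ∑ i, P (i, k)) = t := by
    funext k
    simp [P, kron, ← sum_mul, Equiv.sum_comp (σ k) r, hr.2]
  have hPsub := hsub m K P ((hr.kron ht).comp_equiv _)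
  rw [hPs, hPt] at hPsub
  have hPsym : S (m * K) (fun x => P (finProdFinEquiv.symm x)) = _ :=
    hsym.apply_comp_perm finProdFinEquiv (hr.kron ht) (Equiv.prodCongrLeft σ)
  linarith [hadd m K r t hr ht, hadd m K s t hs ht]

/-- A continuous, symmetric, additive and subadditive `S` on the
positive distributions is Schur-concave: `r ≻ s` implies `S(r) ≤ S(s)`. -/
theorem schur_concave (S : ∀ n : ℕ, (Fin n → ℝ) → ℝ)
    (hcont : ContinuousS S) (hsym : SymmetricS S)
    (hadd : AdditiveS S) (hsub : SubadditiveS S)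
    (m : ℕ) (r s : Fin m → ℝ) (hr : IsPosProbDist r) (hs : IsPosProbDist s)
    (hmaj : Majorizes r s) :
    S m r ≤ S m s :=
  schur_concave_general S hsym hadd hsub m r s hr hs hmaj
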